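/- arXiv:2309.14980 — 3 statements merged into one kernel-verified Lean document; each statement's English description precedes it below -/
import Mathlib

section
/- For Haar-random V on U(d) and linear operators A, B, C, D: E[tr(V† A V B) tr(V† C V D)] = (tr A tr B tr C tr D + tr(AC) tr(BD))/(d² - 1) − (tr(AC) tr B tr D + tr A tr C tr(BD))/(d(d² - 1)). -/
/-!
By left invariance of `μ`, the matrix `M = E[(V B V†) ⊗ (V D V†)]` commutes with every `U ⊗ U`.
Commuting with diagonal phase matrices confines `M` to the entries `(p, p)` and `(p, p.swap)`,
commuting with permutation matrices makes these entries constant along orbits, and one Householder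
reflection ties the entries `((i, i), (i, i))` to the others. Hence `M = a • 1 + b • S` with `S` the
swap of the two tensor factors. The integrand is `tr((A ⊗ C) (V B V† ⊗ V D V†))`, so the integral is
`a tr A tr C + b tr(AC)`, and `a, b` are read off from `tr M = tr B tr D` and `tr (S M) = tr (BD)`.
-/

open MeasureTheory Matrix Complex

noncomputable section

instance matrixMeasurableSpace {m n : Type*} : MeasurableSpace (Matrix m n ℂ) :=
  (inferInstance : MeasurableSpace (m → n → ℂ))

open Kronecker

lemma exists_perm_apply_eq_and_apply_eq {ι : Type*} {i₀ i₁ i j : ι} (h₀₁ : i₀ ≠ i₁)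
    (hij : i ≠ j) : ∃ σ : Equiv.Perm ι, σ i₀ = i ∧ σ i₁ = j := by
  obtain ⟨σ, hσ⟩ := Equiv.Perm.exists_extending_pair ![i₀, i₁] ![i, j]
    (by simpa [Function.Injective, Fin.forall_fin_two] using ⟨h₀₁, h₀₁.symm⟩)
    (by simpa [Function.Injective, Fin.forall_fin_two] using ⟨hij, hij.symm⟩)
  exact ⟨σ, hσ 0, hσ 1⟩

section UnitaryMatrices

variable {ι : Type*} [DecidableEq ι]

lemma permMatrix_kronecker_permMatrix {κ α : Type*} [DecidableEq κ] [MulZeroOneClass α]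
    (σ : Equiv.Perm ι) (τ : Equiv.Perm κ) :
    σ.permMatrix α ⊗ₖ τ.permMatrix α = Equiv.Perm.permMatrix α (σ.prodCongr τ) := by
  ext p q
  simp only [kroneckerMap_apply, PEquiv.toMatrix_apply, Equiv.toPEquiv_apply, Option.mem_def,
    Option.some.injEq, Equiv.prodCongr_apply, Prod.map, Prod.ext_iff]
  split_ifs <;> simp_all

variable [Fintype ι]

lemma diagonal_mem_unitaryGroup {w : ι → ℂ} (hw : ∀ i, ‖w i‖ = 1) :
    diagonal w ∈ unitaryGroup ι ℂ := by
  rw [mem_unitaryGroup_iff, star_eq_conjTranspose, diagonal_conjTranspose, diagonal_mul_diagonal,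
    ← diagonal_one]
  congr 1
  ext i
  simp [RCLike.mul_conj, hw]

lemma permMatrix_mem_unitaryGroup (σ : Equiv.Perm ι) : σ.permMatrix ℂ ∈ unitaryGroup ι ℂ := by
  rw [mem_unitaryGroup_iff', star_eq_conjTranspose, conjTranspose_permMatrix, ← permMatrix_mul,
    mul_inv_cancel, permMatrix_one]

-- For `w = 0` this is `1`, since `2 / 0 = 0`.
def householder (w : ι → ℂ) : Matrix ι ι ℂ :=
  1 - (2 / (star w ⬝ᵥ w)) • vecMulVec w (star w)

lemma householder_apply (w : ι → ℂ) (i j : ι) :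
    householder w i j = (if i = j then 1 else 0) - 2 / (star w ⬝ᵥ w) * (w i * star (w j)) := by
  simp [householder, one_apply, vecMulVec_apply]

lemma householder_mem_unitaryGroup (w : ι → ℂ) : householder w ∈ unitaryGroup ι ℂ := by
  have hs : star (star w ⬝ᵥ w) = star w ⬝ᵥ w := (star_dotProduct w w).symm
  have hP : vecMulVec w (star w) * vecMulVec w (star w) =
      (star w ⬝ᵥ w) • vecMulVec w (star w) := by
    rw [vecMulVec_mul_vecMulVec, vecMulVec_smul]
  rw [mem_unitaryGroup_iff', star_eq_conjTranspose, householder, conjTranspose_sub,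
    conjTranspose_one, conjTranspose_smul, conjTranspose_vecMulVec, star_star, star_div₀, hs,
    star_ofNat]
  simp only [sub_mul, mul_sub, one_mul, mul_one, smul_mul_smul_comm, hP, smul_smul]
  generalize star w ⬝ᵥ w = s
  match_scalars
  · rfl
  · rcases eq_or_ne s 0 with h | h
    · simp [h]
    · field_simp
      ring

lemma exists_mem_unitaryGroup_apply_mul_apply_ne_zero {i j : ι} (hij : i ≠ j) :
    ∃ R ∈ unitaryGroup ι ℂ, R i i * R j i ≠ 0 := by
  refine ⟨householder (Pi.single i 1 + Pi.single j 2), householder_mem_unitaryGroup _, ?_⟩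
  simp [householder_apply, hij, hij.symm]
  norm_num

end UnitaryMatrices

section SwapMatrix

variable (ι : Type*) [DecidableEq ι]

def swapMatrix : Matrix (ι × ι) (ι × ι) ℂ := Equiv.Perm.permMatrix ℂ (Equiv.prodComm ι ι)

variable {ι}

lemma swapMatrix_apply (p q : ι × ι) : swapMatrix ι p q = if p.swap = q then 1 else 0 := by
  simp [swapMatrix]

variable [Fintype ι]

lemma swapMatrix_mul_self : swapMatrix ι * swapMatrix ι = 1 := by
  rw [swapMatrix, ← permMatrix_mul]
  convert permMatrix_one
  ext <;> simp

lemma trace_swapMatrix_mul_kronecker (X Y : Matrix ι ι ℂ) :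
    trace (swapMatrix ι * (X ⊗ₖ Y)) = trace (X * Y) := by
  rw [swapMatrix, PEquiv.toMatrix_toPEquiv_mul]
  simp only [trace, diag, submatrix_apply, Equiv.prodComm_apply, id, kroneckerMap_apply,
    Fintype.sum_prod_type, Prod.fst_swap, Prod.snd_swap, mul_apply]
  exact Finset.sum_comm

lemma trace_swapMatrix : trace (swapMatrix ι) = Fintype.card ι := by
  simpa using trace_swapMatrix_mul_kronecker (1 : Matrix ι ι ℂ) 1

lemma trace_smul_one_add_smul_swapMatrix (a b : ℂ) :
    trace (a • 1 + b • swapMatrix ι) = a * Fintype.card ι ^ 2 + b * Fintype.card ι := by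
  rw [trace_add, trace_smul, trace_smul, trace_one, trace_swapMatrix, Fintype.card_prod]
  push_cast
  ring

lemma trace_kronecker_mul_smul_one_add_smul_swapMatrix (a b : ℂ) (X Y : Matrix ι ι ℂ) :
    trace ((X ⊗ₖ Y) * (a • 1 + b • swapMatrix ι)) =
      a * (trace X * trace Y) + b * trace (X * Y) := by
  rw [mul_add, mul_smul_comm, mul_smul_comm, trace_add, trace_smul, trace_smul, mul_one,
    trace_kronecker, trace_mul_comm, trace_swapMatrix_mul_kronecker, smul_eq_mul, smul_eq_mul]

lemma trace_swapMatrix_mul_smul_one_add_smul_swapMatrix (a b : ℂ) :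
    trace (swapMatrix ι * (a • 1 + b • swapMatrix ι)) =
      a * Fintype.card ι + b * Fintype.card ι ^ 2 := by
  rw [mul_add, mul_smul_comm, mul_smul_comm, mul_one, swapMatrix_mul_self, trace_add, trace_smul,
    trace_smul, trace_swapMatrix, trace_one, Fintype.card_prod]
  push_cast
  ring

end SwapMatrix

section Commutant

variable {ι : Type*} [DecidableEq ι]

lemma eq_or_eq_swap_of_forall_count_eq {p q : ι × ι}
    (h : ∀ t, (if p.1 = t then 1 else 0) + (if p.2 = t then 1 else 0) =
      (if q.1 = t then 1 else 0) + (if q.2 = t then (1 : ℕ) else 0)) :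
    q = p ∨ q = p.swap := by
  obtain ⟨i, j⟩ := p
  obtain ⟨k, l⟩ := q
  have hk := h k
  have hl := h l
  simp only [Prod.mk.injEq, Prod.swap_prod_mk] at hk hl ⊢
  split_ifs at hk hl <;> subst_vars <;> simp_all

lemma mulSingle_I_mul_mulSingle_I (t a b : ι) :
    (Pi.mulSingle t I : ι → ℂ) a * (Pi.mulSingle t I : ι → ℂ) b =
      I ^ ((if a = t then 1 else 0) + (if b = t then 1 else 0)) := by
  simp only [Pi.mulSingle_apply]
  split_ifs <;> simp [sq]

variable [Fintype ι] {M : Matrix (ι × ι) (ι × ι) ℂ}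

lemma apply_eq_zero_of_forall_commute
    (hM : ∀ U ∈ unitaryGroup ι ℂ, Commute (U ⊗ₖ U) M) {p q : ι × ι} (hpq : q ≠ p ∧ q ≠ p.swap) :
    M p q = 0 := by
  by_contra hne
  refine not_or_intro hpq.1 hpq.2 (eq_or_eq_swap_of_forall_count_eq fun t => ?_)
  have hphase (r : ι) : ‖(Pi.mulSingle t I : ι → ℂ) r‖ = 1 := by
    rw [Pi.mulSingle_apply]
    split_ifs <;> simp
  have h := congr_fun₂ (hM _ (diagonal_mem_unitaryGroup hphase)).eq p q
  rw [diagonal_kronecker_diagonal, diagonal_mul, mul_diagonal, mul_comm,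
    mulSingle_I_mul_mulSingle_I, mulSingle_I_mul_mulSingle_I] at h
  -- `I ^ k` for `k ≤ 2` determines `k`, the number of occurrences of `t` in `p` (resp. `q`).
  refine Complex.isPrimitiveRoot_I.pow_inj ?_ ?_ (mul_left_cancel₀ hne h) <;> split_ifs <;> omega

lemma apply_prodMap_eq_of_forall_commute
    (hM : ∀ U ∈ unitaryGroup ι ℂ, Commute (U ⊗ₖ U) M) (σ : Equiv.Perm ι) (p q : ι × ι) :
    M (Prod.map σ σ p) (Prod.map σ σ q) = M p q := by
  have h := (hM _ (permMatrix_mem_unitaryGroup σ)).eq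
  rw [permMatrix_kronecker_permMatrix, PEquiv.toMatrix_toPEquiv_mul,
    PEquiv.mul_toMatrix_toPEquiv] at h
  simpa [Prod.map_map] using congr_fun₂ h p (Prod.map σ σ q)

lemma apply_diag_eq_of_forall_commute
    (hM : ∀ U ∈ unitaryGroup ι ℂ, Commute (U ⊗ₖ U) M) {i j : ι} (hij : i ≠ j) :
    M (i, i) (i, i) = M (i, j) (i, j) + M (i, j) (j, i) := by
  obtain ⟨R, hR, hRij⟩ := exists_mem_unitaryGroup_apply_mul_apply_ne_zero hij
  have h := congr_fun₂ (hM R hR).eq (i, j) (i, i)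
  rw [mul_apply, mul_apply, Fintype.sum_eq_single (i, i), Fintype.sum_eq_add (i, j) (j, i)] at h
  · simp only [kroneckerMap_apply] at h
    refine mul_left_cancel₀ hRij ?_
    linear_combination h
  · simp [hij]
  · rintro s ⟨hs₁, hs₂⟩
    rw [apply_eq_zero_of_forall_commute hM ⟨hs₁, fun h => hs₂ (by simp [h])⟩, zero_mul]
  · intro r hr
    have hr' : (i, i) ≠ r.swap := fun h => hr (by rw [← Prod.swap_swap r, ← h]; rfl)
    rw [apply_eq_zero_of_forall_commute hM ⟨hr.symm, hr'⟩, mul_zero]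

theorem exists_eq_smul_one_add_smul_swapMatrix_of_forall_commute [Nontrivial ι]
    (hM : ∀ U ∈ unitaryGroup ι ℂ, Commute (U ⊗ₖ U) M) :
    ∃ a b : ℂ, M = a • 1 + b • swapMatrix ι := by
  obtain ⟨i₀, i₁, h₀₁⟩ := exists_pair_ne ι
  refine ⟨M (i₀, i₁) (i₀, i₁), M (i₀, i₁) (i₁, i₀), ?_⟩
  ext ⟨i, j⟩ q
  simp only [Matrix.add_apply, Matrix.smul_apply, one_apply, swapMatrix_apply, Prod.swap_prod_mk,
    smul_eq_mul]
  by_cases hq : q ≠ (i, j) ∧ q ≠ (j, i)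
  · rw [apply_eq_zero_of_forall_commute hM hq, if_neg hq.1.symm, if_neg hq.2.symm]
    ring
  rcases eq_or_ne i j with rfl | hij
  · obtain rfl : q = (i, i) := by tauto
    have h := apply_prodMap_eq_of_forall_commute hM (Equiv.swap i₀ i) (i₀, i₀) (i₀, i₀)
    simp only [Prod.map, Equiv.swap_apply_left] at h
    rw [h, apply_diag_eq_of_forall_commute hM h₀₁]
    simp
  obtain ⟨σ, rfl, rfl⟩ := exists_perm_apply_eq_and_apply_eq h₀₁ hij
  have hσ := σ.injective.ne h₀₁
  obtain rfl | rfl : q = (σ i₀, σ i₁) ∨ q = (σ i₁, σ i₀) := by tauto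
  · rw [← apply_prodMap_eq_of_forall_commute hM σ (i₀, i₁) (i₀, i₁)]
    simp [hσ]
  · rw [← apply_prodMap_eq_of_forall_commute hM σ (i₀, i₁) (i₁, i₀)]
    simp [hσ]

end Commutant

section EntrywiseIntegral

variable {X : Type*} [MeasurableSpace X] {l m n : Type*}

variable (μ : Measure X) in
def entrywiseIntegral (F : X → Matrix m n ℂ) : Matrix m n ℂ :=
  of fun i j => ∫ x, F x i j ∂μ

variable {μ : Measure X}

lemma mul_entrywiseIntegral [Fintype m] {F : X → Matrix m n ℂ}
    (hF : ∀ i j, Integrable (fun x => F x i j) μ) (N : Matrix l m ℂ) :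
    N * entrywiseIntegral μ F = entrywiseIntegral μ fun x => N * F x := by
  ext i j
  simp only [entrywiseIntegral, of_apply, mul_apply]
  rw [integral_finsetSum _ fun k _ => (hF k j).const_mul _]
  simp_rw [integral_const_mul]

lemma entrywiseIntegral_mul [Fintype n] {F : X → Matrix m n ℂ}
    (hF : ∀ i j, Integrable (fun x => F x i j) μ) (N : Matrix n l ℂ) :
    entrywiseIntegral μ F * N = entrywiseIntegral μ fun x => F x * N := by
  ext i j
  simp only [entrywiseIntegral, of_apply, mul_apply]
  rw [integral_finsetSum _ fun k _ => (hF i k).mul_const _]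
  simp_rw [integral_mul_const]

lemma trace_entrywiseIntegral [Fintype m] {F : X → Matrix m m ℂ}
    (hF : ∀ i j, Integrable (fun x => F x i j) μ) :
    trace (entrywiseIntegral μ F) = ∫ x, trace (F x) ∂μ := by
  simp only [trace, diag, entrywiseIntegral, of_apply]
  rw [integral_finsetSum _ fun i _ => hF i i]

lemma trace_mul_entrywiseIntegral [Fintype m] [Fintype n] {F : X → Matrix m n ℂ}
    (hF : ∀ i j, Integrable (fun x => F x i j) μ) (N : Matrix n m ℂ) :
    trace (N * entrywiseIntegral μ F) = ∫ x, trace (N * F x) ∂μ := by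
  rw [mul_entrywiseIntegral hF, trace_entrywiseIntegral fun i j => ?_]
  simp only [mul_apply]
  exact integrable_finsetSum _ fun k _ => (hF k j).const_mul _

end EntrywiseIntegral

instance {m n : Type*} [Countable m] [Countable n] : BorelSpace (Matrix m n ℂ) :=
  inferInstanceAs (BorelSpace (m → n → ℂ))

instance {ι : Type*} [Fintype ι] [DecidableEq ι] : CompactSpace (unitaryGroup ι ℂ) := by
  have hK : IsCompact
      (Set.univ.pi fun _ : ι => Set.univ.pi fun _ : ι => Metric.closedBall (0 : ℂ) 1 :
        Set (Matrix ι ι ℂ)) :=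
    isCompact_univ_pi fun _ => isCompact_univ_pi fun _ => isCompact_closedBall 0 1
  refine isCompact_iff_compactSpace.mp
    (hK.of_isClosed_subset (isClosed_unitary (R := Matrix ι ι ℂ)) fun U hU i _ j _ => ?_)
  simpa using entry_norm_bound_of_unitary hU i j

section SecondMoment

variable {ι : Type*} [Fintype ι]

def kroneckerConj (B D U : Matrix ι ι ℂ) : Matrix (ι × ι) (ι × ι) ℂ :=
  (U * B * Uᴴ) ⊗ₖ (U * D * Uᴴ)

lemma trace_kronecker_mul_kroneckerConj (A C B D V : Matrix ι ι ℂ) :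
    trace ((A ⊗ₖ C) * kroneckerConj B D V) = trace (Vᴴ * A * V * B) * trace (Vᴴ * C * V * D) := by
  have h (X Y : Matrix ι ι ℂ) : trace (X * (V * Y * Vᴴ)) = trace (Vᴴ * X * V * Y) := by
    rw [← mul_assoc, ← mul_assoc, trace_mul_comm, ← mul_assoc, ← mul_assoc]
  rw [kroneckerConj, ← mul_kronecker_mul, trace_kronecker, h, h]

variable [DecidableEq ι]

lemma trace_mul_mul_conjTranspose {V : Matrix ι ι ℂ} (hV : V ∈ unitaryGroup ι ℂ)
    (X : Matrix ι ι ℂ) : trace (V * X * Vᴴ) = trace X := by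
  rw [trace_mul_cycle, ← star_eq_conjTranspose, Unitary.star_mul_self_of_mem hV, one_mul]

lemma kronecker_mul_kroneckerConj {U : Matrix ι ι ℂ} (hU : U ∈ unitaryGroup ι ℂ)
    (B D V : Matrix ι ι ℂ) :
    (U ⊗ₖ U) * kroneckerConj B D V = kroneckerConj B D (U * V) * (U ⊗ₖ U) := by
  have hUU : Uᴴ * U = 1 := Unitary.star_mul_self_of_mem hU
  simp only [kroneckerConj, ← mul_kronecker_mul, conjTranspose_mul, mul_assoc, hUU, mul_one]

lemma trace_kroneckerConj {V : Matrix ι ι ℂ} (hV : V ∈ unitaryGroup ι ℂ) (B D : Matrix ι ι ℂ) :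
    trace (kroneckerConj B D V) = trace B * trace D := by
  rw [kroneckerConj, trace_kronecker, trace_mul_mul_conjTranspose hV,
    trace_mul_mul_conjTranspose hV]

lemma trace_swapMatrix_mul_kroneckerConj {V : Matrix ι ι ℂ} (hV : V ∈ unitaryGroup ι ℂ)
    (B D : Matrix ι ι ℂ) : trace (swapMatrix ι * kroneckerConj B D V) = trace (B * D) := by
  have hVV : Vᴴ * V = 1 := Unitary.star_mul_self_of_mem hV
  have h : V * B * Vᴴ * (V * D * Vᴴ) = V * (B * D) * Vᴴ := by
    simp only [mul_assoc, ← mul_assoc Vᴴ V, hVV, one_mul]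
  rw [kroneckerConj, trace_swapMatrix_mul_kronecker, h, trace_mul_mul_conjTranspose hV]

variable (μ : Measure (unitaryGroup ι ℂ))

def secondMoment (B D : Matrix ι ι ℂ) : Matrix (ι × ι) (ι × ι) ℂ :=
  entrywiseIntegral μ fun V : unitaryGroup ι ℂ => kroneckerConj B D V

variable [IsFiniteMeasure μ]

lemma integrable_kroneckerConj_apply (B D : Matrix ι ι ℂ) (p q : ι × ι) :
    Integrable (fun V : unitaryGroup ι ℂ => kroneckerConj B D V p q) μ := by
  refine Continuous.integrable_of_hasCompactSupport ?_ (HasCompactSupport.of_compactSpace _)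
  simp only [kroneckerConj, kroneckerMap_apply]
  fun_prop

lemma trace_mul_secondMoment (B D : Matrix ι ι ℂ) (N : Matrix (ι × ι) (ι × ι) ℂ) :
    trace (N * secondMoment μ B D) = ∫ V, trace (N * kroneckerConj B D V) ∂μ := by
  rw [secondMoment, trace_mul_entrywiseIntegral (integrable_kroneckerConj_apply μ B D)]

lemma commute_kronecker_secondMoment [μ.IsMulLeftInvariant] (B D : Matrix ι ι ℂ)
    {U : Matrix ι ι ℂ} (hU : U ∈ unitaryGroup ι ℂ) : Commute (U ⊗ₖ U) (secondMoment μ B D) := by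
  let W : unitaryGroup ι ℂ := ⟨U, hU⟩
  have hF := integrable_kroneckerConj_apply μ B D
  have hinv : (entrywiseIntegral μ fun V : unitaryGroup ι ℂ => kroneckerConj B D ↑(W * V)) =
      secondMoment μ B D := by
    ext p q
    exact integral_mul_left_eq_self (fun V : unitaryGroup ι ℂ => kroneckerConj B D V p q) W
  calc (U ⊗ₖ U) * secondMoment μ B D
      = entrywiseIntegral μ fun V => kroneckerConj B D ↑(W * V) * (U ⊗ₖ U) := by
        rw [secondMoment, mul_entrywiseIntegral hF]
        simp_rw [kronecker_mul_kroneckerConj hU]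
        rfl
    _ = secondMoment μ B D * (U ⊗ₖ U) := by
        rw [← entrywiseIntegral_mul fun p q => (hF p q).comp_mul_left W, hinv]

lemma trace_kronecker_mul_secondMoment (A B C D : Matrix ι ι ℂ) :
    trace ((A ⊗ₖ C) * secondMoment μ B D) =
      ∫ V : unitaryGroup ι ℂ, trace ((V : Matrix ι ι ℂ)ᴴ * A * (V : Matrix ι ι ℂ) * B) *
        trace ((V : Matrix ι ι ℂ)ᴴ * C * (V : Matrix ι ι ℂ) * D) ∂μ := by
  simp_rw [trace_mul_secondMoment, trace_kronecker_mul_kroneckerConj]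

variable [IsProbabilityMeasure μ]

lemma trace_secondMoment (B D : Matrix ι ι ℂ) :
    trace (secondMoment μ B D) = trace B * trace D := by
  simpa [trace_kroneckerConj] using trace_mul_secondMoment μ B D 1

lemma trace_swapMatrix_mul_secondMoment (B D : Matrix ι ι ℂ) :
    trace (swapMatrix ι * secondMoment μ B D) = trace (B * D) := by
  simpa [trace_swapMatrix_mul_kroneckerConj] using trace_mul_secondMoment μ B D (swapMatrix ι)

end SecondMoment

/-- **Second-moment Haar integral for products of traces:**
`E[tr(V† A V B) tr(V† C V D)] = (tr A tr B tr C tr D + tr(AC) tr(BD))/(d²−1)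
  − (tr(AC) tr B tr D + tr A tr C tr(BD))/(d(d²−1))` for Haar-random `V ∈ U(d)`, `d ≥ 2`. -/
theorem stmt8 (d : ℕ) (hd : 2 ≤ d)
    (μ : Measure (Matrix.unitaryGroup (Fin d) ℂ)) [IsProbabilityMeasure μ]
    (hinv : ∀ U : Matrix.unitaryGroup (Fin d) ℂ, μ.map (fun V => U * V) = μ)
    (A B C D : Matrix (Fin d) (Fin d) ℂ) :
    (∫ (V : Matrix.unitaryGroup (Fin d) ℂ),
        ((((V : Matrix (Fin d) (Fin d) ℂ))ᴴ * A * (V : Matrix (Fin d) (Fin d) ℂ) * B).trace *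
         (((V : Matrix (Fin d) (Fin d) ℂ))ᴴ * C * (V : Matrix (Fin d) (Fin d) ℂ) * D).trace) ∂μ)
      = (A.trace * B.trace * C.trace * D.trace + (A * C).trace * (B * D).trace)
          / ((d : ℂ) ^ 2 - 1)
        - ((A * C).trace * B.trace * D.trace + A.trace * C.trace * (B * D).trace)
          / ((d : ℂ) * ((d : ℂ) ^ 2 - 1)) := by
  have : μ.IsMulLeftInvariant := ⟨hinv⟩
  have : Nontrivial (Fin d) := Fin.nontrivial_iff_two_le.mpr hd
  obtain ⟨a, b, hM⟩ := exists_eq_smul_one_add_smul_swapMatrix_of_forall_commute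
    fun U hU => commute_kronecker_secondMoment μ B D hU
  have htrace := trace_secondMoment μ B D
  have hswap := trace_swapMatrix_mul_secondMoment μ B D
  have hAC := trace_kronecker_mul_secondMoment μ A B C D
  rw [hM, trace_smul_one_add_smul_swapMatrix, Fintype.card_fin] at htrace
  rw [hM, trace_swapMatrix_mul_smul_one_add_smul_swapMatrix, Fintype.card_fin] at hswap
  rw [hM, trace_kronecker_mul_smul_one_add_smul_swapMatrix] at hAC
  have hd₀ : (d : ℂ) ≠ 0 := by exact_mod_cast (by omega : d ≠ 0)
  have hd₁ : (d : ℂ) ^ 2 - 1 ≠ 0 := by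
    rw [sub_ne_zero]
    exact_mod_cast (by nlinarith : d ^ 2 ≠ 1)
  rw [← hAC, div_sub_div _ _ hd₁ (mul_ne_zero hd₀ hd₁),
    eq_div_iff (mul_ne_zero hd₁ (mul_ne_zero hd₀ hd₁))]
  linear_combination ((d : ℂ) ^ 2 - 1) * ((d * (A.trace * C.trace) - (A * C).trace) * htrace +
    (d * (A * C).trace - A.trace * C.trace) * hswap)
end
end

section
/- Let D_{μν} = ∂_μ∂_ν(|ψ(θ)⟩⟨ψ(θ)|) for a circuit U(θ) = ∏_μ e^{−iΩ_μθ_μ} W_μ applied to a fixed state. Then D_{μν} is traceless Hermitian, has rank at most 4, and ‖D_{μν}‖_∞ ≤ 4‖Ω_μ‖_∞ ‖Ω_ν‖_∞; consequently ‖D_{μν}‖_2 ≤ 8‖Ω_μ‖_∞‖Ω_ν‖_∞. -/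
open Matrix Complex

/-!
Conjugation by a unitary preserves self-adjointness, trace and rank and does not increase the
operator or the Frobenius norm, while a commutator `[a, b]` with `b` skew-adjoint is self-adjoint,
traceless, of rank at most `2 rank a`, and (as `‖x y‖_F ≤ ‖x‖_F ‖y‖_∞` on either side) of operator
or Frobenius norm at most `2 ‖a‖ ‖b‖_∞`. Applying this twice to
`D = V [V' [ρ₀, iΩ_μ] V'†, iΩ_ν] V†`, starting from the rank-one projection `ρ₀`, whose operator
and Frobenius norms are `1`, gives all the claims, the Frobenius bound even with constant `4`.
-/

def conjCommutator {R : Type*} [Ring R] [Star R] (U a b : R) : R := U * (a * b - b * a) * star U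

section StarRing

variable {R : Type*} [Ring R] [StarRing R]

theorem map_conjCommutator {S F : Type*} [Ring S] [StarRing S] [FunLike F R S]
    [RingHomClass F R S] [StarHomClass F R S] (f : F) (U a b : R) :
    f (conjCommutator U a b) = conjCommutator (f U) (f a) (f b) := by
  simp only [conjCommutator, map_mul, map_sub, map_star]

theorem IsSelfAdjoint.conjCommutator {a b : R} (ha : IsSelfAdjoint a) (hb : b ∈ skewAdjoint R)
    (U : R) : IsSelfAdjoint (conjCommutator U a b) := by
  refine IsSelfAdjoint.conjugate ?_ U
  rw [skewAdjoint.mem_iff] at hb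
  simp only [IsSelfAdjoint, star_sub, star_mul, ha.star_eq, hb, neg_mul, mul_neg, sub_neg_eq_add]
  abel

end StarRing

theorem norm_commutator_le {R : Type*} [NonUnitalSeminormedRing R] (a b : R) :
    ‖a * b - b * a‖ ≤ 2 * ‖a‖ * ‖b‖ := by
  calc ‖a * b - b * a‖ ≤ ‖a‖ * ‖b‖ + ‖b‖ * ‖a‖ :=
        (norm_sub_le _ _).trans (add_le_add (norm_mul_le _ _) (norm_mul_le _ _))
    _ = 2 * ‖a‖ * ‖b‖ := by ring

namespace CStarRing

variable {E : Type*} [NormedRing E] [StarRing E] [CStarRing E]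

theorem norm_conjCommutator_le {U : E} (hU : U ∈ unitary E) (a b : E) :
    ‖conjCommutator U a b‖ ≤ 2 * ‖a‖ * ‖b‖ := by
  rw [conjCommutator, norm_mul_mem_unitary _ (Unitary.star_mem hU), norm_mem_unitary_mul _ hU]
  exact norm_commutator_le a b

theorem norm_conjCommutator_conjCommutator_le {U U' p : E} (hU : U ∈ unitary E)
    (hU' : U' ∈ unitary E) (hp : ‖p‖ ≤ 1) (a b : E) :
    ‖conjCommutator U (conjCommutator U' p a) b‖ ≤ 4 * ‖a‖ * ‖b‖ := by
  grw [norm_conjCommutator_le hU, norm_conjCommutator_le hU', hp]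
  linarith

end CStarRing

namespace Matrix

variable {m n : Type*} [Fintype n]

theorem isStarProjection_vecMulVec_star {α : Type*} [Semiring α] [StarRing α] {x : n → α}
    (hx : star x ⬝ᵥ x = 1) : IsStarProjection (vecMulVec x (star x)) where
  isIdempotentElem := by rw [IsIdempotentElem, vecMulVec_mul_vecMulVec, hx, one_smul]
  isSelfAdjoint := by
    rw [IsSelfAdjoint, star_eq_conjTranspose, conjTranspose_vecMulVec, star_star]

theorem rank_sub_le {K : Type*} [Field K] (A B : Matrix m n K) :
    (A - B).rank ≤ A.rank + B.rank := by
  have hle : LinearMap.range (A - B).mulVecLin ≤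
      LinearMap.range A.mulVecLin ⊔ LinearMap.range B.mulVecLin := by
    rintro y ⟨v, rfl⟩
    rw [mulVecLin_apply, sub_mulVec]
    exact Submodule.sub_mem _ (Submodule.mem_sup_left ⟨v, rfl⟩)
      (Submodule.mem_sup_right ⟨v, rfl⟩)
  exact (Submodule.finrank_mono hle).trans (Submodule.finrank_add_le_finrank_add_finrank _ _)

section

variable [DecidableEq n]

theorem trace_conjCommutator {R : Type*} [CommRing R] [StarRing R] {U : Matrix n n R}
    (hU : U ∈ unitaryGroup n R) (A B : Matrix n n R) : trace (conjCommutator U A B) = 0 := by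
  rw [conjCommutator, trace_mul_cycle, Unitary.star_mul_self_of_mem hU, Matrix.one_mul, trace_sub,
    trace_mul_comm, sub_self]

variable {K : Type*} [Field K] [StarRing K]

theorem rank_conjCommutator_le (U A B : Matrix n n K) :
    (conjCommutator U A B).rank ≤ 2 * A.rank := by
  calc (conjCommutator U A B).rank ≤ (A * B - B * A).rank :=
        (rank_mul_le_left _ _).trans (rank_mul_le_right _ _)
    _ ≤ (A * B).rank + (B * A).rank := rank_sub_le _ _
    _ ≤ A.rank + A.rank := add_le_add (rank_mul_le_left _ _) (rank_mul_le_right _ _)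
    _ = 2 * A.rank := by ring

theorem rank_conjCommutator_conjCommutator_le (U U' P B C : Matrix n n K) :
    (conjCommutator U (conjCommutator U' P B) C).rank ≤ 4 * P.rank := by
  have h := rank_conjCommutator_le U' P B
  have h' := rank_conjCommutator_le U (conjCommutator U' P B) C
  omega

variable {𝕜 : Type*} [RCLike 𝕜]

theorem norm_toEuclideanCLM_le_one_of_mem_unitaryGroup {U : Matrix n n 𝕜}
    (hU : U ∈ unitaryGroup n 𝕜) : ‖toEuclideanCLM (𝕜 := 𝕜) U‖ ≤ 1 := by
  rw [← mul_one (toEuclideanCLM (𝕜 := 𝕜) U),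
    CStarRing.norm_mem_unitary_mul _ (Unitary.map_mem _ hU)]
  exact ContinuousLinearMap.norm_id_le

theorem norm_toEuclideanCLM_conjCommutator_conjCommutator_le {U U' P : Matrix n n 𝕜}
    (hU : U ∈ unitaryGroup n 𝕜) (hU' : U' ∈ unitaryGroup n 𝕜) (hP : IsStarProjection P)
    (B C : Matrix n n 𝕜) :
    ‖toEuclideanCLM (𝕜 := 𝕜) (conjCommutator U (conjCommutator U' P B) C)‖ ≤
      4 * ‖toEuclideanCLM (𝕜 := 𝕜) B‖ * ‖toEuclideanCLM (𝕜 := 𝕜) C‖ := by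
  simp only [map_conjCommutator]
  exact CStarRing.norm_conjCommutator_conjCommutator_le (Unitary.map_mem _ hU)
    (Unitary.map_mem _ hU') (IsStarProjection.norm_le _ (hP.map _)) _ _

end

section Frobenius

variable [Fintype m] {𝕜 : Type*} [RCLike 𝕜]

attribute [local instance] frobeniusNormedAddCommGroup

theorem frobenius_norm_sq (M : Matrix m n 𝕜) : ‖M‖ ^ 2 = ∑ i, ∑ j, ‖M i j‖ ^ 2 := by
  rw [frobenius_norm_def, ← Real.rpow_natCast, ← Real.rpow_mul (by positivity)]
  norm_num

theorem frobenius_norm_eq_sqrt_sum_normSq (M : Matrix m n ℂ) :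
    ‖M‖ = √(∑ i, ∑ j, Complex.normSq (M i j)) := by
  rw [← Real.sqrt_sq (norm_nonneg M), frobenius_norm_sq]
  simp only [Complex.normSq_eq_norm_sq]

theorem frobenius_norm_sq_eq_sum_col (M : Matrix m n 𝕜) :
    ‖M‖ ^ 2 = ∑ j, ‖WithLp.toLp 2 (Mᵀ j)‖ ^ 2 := by
  simp only [frobenius_norm_sq, EuclideanSpace.norm_sq_eq]
  exact Finset.sum_comm

theorem frobenius_norm_vecMulVec (x : m → 𝕜) (y : n → 𝕜) :
    ‖vecMulVec x y‖ = ‖WithLp.toLp 2 x‖ * ‖WithLp.toLp 2 y‖ := by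
  refine (sq_eq_sq₀ (norm_nonneg _) (by positivity)).1 ?_
  simp only [frobenius_norm_sq, mul_pow, EuclideanSpace.norm_sq_eq, vecMulVec_apply, norm_mul,
    Finset.sum_mul_sum]

theorem frobenius_norm_vecMulVec_star {x : n → 𝕜} (hx : star x ⬝ᵥ x = 1) :
    ‖vecMulVec x (star x)‖ = 1 := by
  have hx' : ‖WithLp.toLp 2 x‖ ^ 2 = 1 := by
    rw [← RCLike.ofReal_inj (K := 𝕜), RCLike.ofReal_pow, ← inner_self_eq_norm_sq_to_K,
      EuclideanSpace.inner_toLp_toLp, dotProduct_comm, hx, RCLike.ofReal_one]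
  have hstar : ‖WithLp.toLp 2 (star x)‖ = ‖WithLp.toLp 2 x‖ := by
    simp [EuclideanSpace.norm_eq]
  rw [frobenius_norm_vecMulVec, hstar, ← sq, hx']

variable [DecidableEq n]

theorem frobenius_norm_mul_le_opNorm_mul (Y : Matrix n n 𝕜) (X : Matrix n m 𝕜) :
    ‖Y * X‖ ≤ ‖toEuclideanCLM (𝕜 := 𝕜) Y‖ * ‖X‖ := by
  refine le_of_pow_le_pow_left₀ two_ne_zero (by positivity) ?_
  rw [mul_pow, frobenius_norm_sq_eq_sum_col, frobenius_norm_sq_eq_sum_col, Finset.mul_sum]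
  gcongr with j
  rw [← mul_pow]
  gcongr
  exact (toEuclideanCLM (𝕜 := 𝕜) Y).le_opNorm (WithLp.toLp 2 (Xᵀ j))

theorem frobenius_norm_mul_le_mul_opNorm (X : Matrix m n 𝕜) (Y : Matrix n n 𝕜) :
    ‖X * Y‖ ≤ ‖X‖ * ‖toEuclideanCLM (𝕜 := 𝕜) Y‖ := by
  rw [← frobenius_norm_conjTranspose, conjTranspose_mul, ← frobenius_norm_conjTranspose X,
    mul_comm, ← norm_star (toEuclideanCLM (𝕜 := 𝕜) Y), ← map_star]
  exact frobenius_norm_mul_le_opNorm_mul _ _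

theorem frobenius_norm_conj_le {U : Matrix n n 𝕜} (hU : U ∈ unitaryGroup n 𝕜)
    (M : Matrix n n 𝕜) : ‖U * M * star U‖ ≤ ‖M‖ := by
  grw [frobenius_norm_mul_le_mul_opNorm, frobenius_norm_mul_le_opNorm_mul,
    norm_toEuclideanCLM_le_one_of_mem_unitaryGroup hU,
    norm_toEuclideanCLM_le_one_of_mem_unitaryGroup (Unitary.star_mem hU), one_mul, mul_one]

theorem frobenius_norm_commutator_le (A B : Matrix n n 𝕜) :
    ‖A * B - B * A‖ ≤ 2 * ‖A‖ * ‖toEuclideanCLM (𝕜 := 𝕜) B‖ := by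
  grw [norm_sub_le, frobenius_norm_mul_le_mul_opNorm, frobenius_norm_mul_le_opNorm_mul]
  linarith

theorem frobenius_norm_conjCommutator_le {U : Matrix n n 𝕜} (hU : U ∈ unitaryGroup n 𝕜)
    (A B : Matrix n n 𝕜) :
    ‖conjCommutator U A B‖ ≤ 2 * ‖A‖ * ‖toEuclideanCLM (𝕜 := 𝕜) B‖ :=
  (frobenius_norm_conj_le hU _).trans (frobenius_norm_commutator_le A B)

theorem frobenius_norm_conjCommutator_conjCommutator_le {U U' P : Matrix n n 𝕜}
    (hU : U ∈ unitaryGroup n 𝕜) (hU' : U' ∈ unitaryGroup n 𝕜) (hP : ‖P‖ ≤ 1)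
    (B C : Matrix n n 𝕜) :
    ‖conjCommutator U (conjCommutator U' P B) C‖ ≤
      4 * ‖toEuclideanCLM (𝕜 := 𝕜) B‖ * ‖toEuclideanCLM (𝕜 := 𝕜) C‖ := by
  grw [frobenius_norm_conjCommutator_le hU, frobenius_norm_conjCommutator_le hU', hP]
  linarith

end Frobenius

end Matrix

/-- **Properties of the second derivative `D_{μν}` of the output density matrix.**
For `μ ≤ ν`, `D_{μν} = ∂_μ∂_ν(|ψ(θ)⟩⟨ψ(θ)|)` can be written as a nested commutator
`D = V [V' [ρ₀, iΩ_μ] V'†, iΩ_ν] V†` with `V, V'` unitary and `ρ₀ = |x⟩⟨x|` a rank-one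
density matrix. Then `D` is traceless Hermitian of rank at most `4`, its operator norm
is at most `4‖Ω_μ‖_∞‖Ω_ν‖_∞`, and its Frobenius norm is at most `8‖Ω_μ‖_∞‖Ω_ν‖_∞`. -/
theorem stmt14 (d : ℕ)
    (Ωμ Ων : Matrix (Fin d) (Fin d) ℂ) (hΩμ : Ωμ.IsHermitian) (hΩν : Ων.IsHermitian)
    (V V' : Matrix (Fin d) (Fin d) ℂ)
    (hV : V ∈ Matrix.unitaryGroup (Fin d) ℂ) (hV' : V' ∈ Matrix.unitaryGroup (Fin d) ℂ)
    (x : Fin d → ℂ) (hx : star x ⬝ᵥ x = 1)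
    (ρ₀ : Matrix (Fin d) (Fin d) ℂ) (hρ₀ : ρ₀ = Matrix.vecMulVec x (star x))
    (A D : Matrix (Fin d) (Fin d) ℂ)
    (hA : A = V' * (ρ₀ * (Complex.I • Ωμ) - (Complex.I • Ωμ) * ρ₀) * V'ᴴ)
    (hD : D = V * (A * (Complex.I • Ων) - (Complex.I • Ων) * A) * Vᴴ) :
    D.IsHermitian ∧ D.trace = 0 ∧ D.rank ≤ 4 ∧
    ‖(Matrix.toEuclideanCLM (𝕜 := ℂ) D :
        EuclideanSpace ℂ (Fin d) →L[ℂ] EuclideanSpace ℂ (Fin d))‖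
      ≤ 4 * ‖(Matrix.toEuclideanCLM (𝕜 := ℂ) Ωμ :
          EuclideanSpace ℂ (Fin d) →L[ℂ] EuclideanSpace ℂ (Fin d))‖ *
        ‖(Matrix.toEuclideanCLM (𝕜 := ℂ) Ων :
          EuclideanSpace ℂ (Fin d) →L[ℂ] EuclideanSpace ℂ (Fin d))‖ ∧
    Real.sqrt (∑ i, ∑ j, Complex.normSq (D i j))
      ≤ 8 * ‖(Matrix.toEuclideanCLM (𝕜 := ℂ) Ωμ :
          EuclideanSpace ℂ (Fin d) →L[ℂ] EuclideanSpace ℂ (Fin d))‖ *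
        ‖(Matrix.toEuclideanCLM (𝕜 := ℂ) Ων :
          EuclideanSpace ℂ (Fin d) →L[ℂ] EuclideanSpace ℂ (Fin d))‖ := by
  have hA' : A = conjCommutator V' ρ₀ (I • Ωμ) := hA
  have hD' : D = conjCommutator V A (I • Ων) := hD
  have hρ : IsStarProjection ρ₀ := hρ₀ ▸ isStarProjection_vecMulVec_star hx
  have hAh : IsSelfAdjoint A := hA' ▸ hρ.isSelfAdjoint.conjCommutator
    (I_smul_mem_skewAdjoint_iff_isSelfAdjoint.2 hΩμ) V'
  refine ⟨hD' ▸ hAh.conjCommutator (I_smul_mem_skewAdjoint_iff_isSelfAdjoint.2 hΩν) V,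
    hD' ▸ trace_conjCommutator hV _ _, ?_, ?_, ?_⟩
  · have hρr : ρ₀.rank ≤ 1 := hρ₀ ▸ rank_vecMulVec_le x (star x)
    grw [hD', hA', rank_conjCommutator_conjCommutator_le, hρr]
  · simpa only [hD', hA', map_smul, norm_smul, norm_I, one_mul] using
      norm_toEuclideanCLM_conjCommutator_conjCommutator_le hV hV' hρ (I • Ωμ) (I • Ων)
  · let : NormedAddCommGroup (Matrix (Fin d) (Fin d) ℂ) := frobeniusNormedAddCommGroup
    have h := frobenius_norm_conjCommutator_conjCommutator_le hV hV'
      (hρ₀ ▸ frobenius_norm_vecMulVec_star hx).le (I • Ωμ) (I • Ων)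
    simp only [map_smul, norm_smul, norm_I, one_mul] at h
    rw [← frobenius_norm_eq_sqrt_sum_normSq, hD', hA']
    exact h.trans (by gcongr; norm_num)
end

section
/- Let H be a Hermitian operator on a d-dimensional Hilbert space and |ψ⟩ a unit vector. Then tr(H²) − 2⟨ψ|H²|ψ⟩ + ⟨ψ|H|ψ⟩² ≥ 0. -/
open Matrix Complex

noncomputable section

/-! Write `P = |ψ⟩⟨ψ|` and `Q = 1 - P`. Since `Q` is idempotent, cyclicity of the trace gives
`tr((QHQ)²) = tr(HQHQ)`, and expanding `Q = 1 - P` turns this into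
`tr(H²) − 2⟨ψ|H²|ψ⟩ + ⟨ψ|H|ψ⟩²`. As `QHQ` is Hermitian, `tr((QHQ)²)` is a squared Frobenius norm,
hence nonnegative. -/

namespace Matrix

variable {n R : Type*} [Fintype n]

section CommRing

variable [CommRing R]

theorem trace_vecMulVec_mul (u v : n → R) (A : Matrix n n R) :
    (vecMulVec u v * A).trace = v ⬝ᵥ A *ᵥ u := by
  rw [vecMulVec_mul, trace_vecMulVec, dotProduct_comm, dotProduct_mulVec]

theorem vecMulVec_mul_mul_vecMulVec (u v : n → R) (A : Matrix n n R) :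
    vecMulVec u v * A * vecMulVec u v = (v ⬝ᵥ A *ᵥ u) • vecMulVec u v := by
  rw [Matrix.mul_assoc, mul_vecMulVec, vecMulVec_mul_vecMulVec, vecMulVec_smul]

theorem isIdempotentElem_vecMulVec {u v : n → R} (h : v ⬝ᵥ u = 1) :
    IsIdempotentElem (vecMulVec u v) := by
  rw [IsIdempotentElem, vecMulVec_mul_vecMulVec, h, one_smul]

theorem trace_mul_mul_self_of_isIdempotentElem {Q : Matrix n n R} (hQ : IsIdempotentElem Q)
    (A : Matrix n n R) : (Q * A * Q * (Q * A * Q)).trace = (A * Q * A * Q).trace := by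
  have hQQ : Q * Q = Q := hQ
  rw [show Q * A * Q * (Q * A * Q) = Q * (A * (Q * Q) * A * Q) by simp only [Matrix.mul_assoc],
    hQQ, trace_mul_comm, Matrix.mul_assoc _ Q Q, hQQ]

variable [DecidableEq n]

theorem trace_mul_one_sub_vecMulVec_mul_one_sub_vecMulVec (u v : n → R) (A : Matrix n n R) :
    (A * (1 - vecMulVec u v) * A * (1 - vecMulVec u v)).trace
      = (A * A).trace - 2 * (v ⬝ᵥ (A * A) *ᵥ u) + (v ⬝ᵥ A *ᵥ u) ^ 2 := by
  set P := vecMulVec u v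
  have hAPA : (A * P * A).trace = (A * A * P).trace := by
    rw [trace_mul_comm, ← Matrix.mul_assoc]
  have hAPAP : (A * P * A * P).trace = (v ⬝ᵥ A *ᵥ u) ^ 2 := by
    rw [trace_mul_comm, ← Matrix.mul_assoc, ← Matrix.mul_assoc, vecMulVec_mul_mul_vecMulVec,
      smul_mul_assoc, trace_smul, trace_vecMulVec_mul, smul_eq_mul, sq]
  have hexpand : A * (1 - P) * A * (1 - P) = A * A - A * P * A - A * A * P + A * P * A * P := by
    noncomm_ring
  rw [hexpand, trace_add, trace_sub, trace_sub, hAPA, hAPAP, trace_mul_comm (A * A),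
    trace_vecMulVec_mul]
  ring

theorem trace_sq_compression_one_sub_vecMulVec {u v : n → R} (h : v ⬝ᵥ u = 1)
    (A : Matrix n n R) :
    ((1 - vecMulVec u v) * A * (1 - vecMulVec u v) *
        ((1 - vecMulVec u v) * A * (1 - vecMulVec u v))).trace
      = (A * A).trace - 2 * (v ⬝ᵥ (A * A) *ᵥ u) + (v ⬝ᵥ A *ᵥ u) ^ 2 := by
  rw [trace_mul_mul_self_of_isIdempotentElem (isIdempotentElem_vecMulVec h).one_sub,
    trace_mul_one_sub_vecMulVec_mul_one_sub_vecMulVec]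

end CommRing

theorem IsHermitian.trace_mul_self_nonneg [CommRing R] [PartialOrder R] [StarRing R]
    [StarOrderedRing R] {M : Matrix n n R} (hM : M.IsHermitian) : 0 ≤ (M * M).trace := by
  simpa only [hM.eq] using (posSemidef_conjTranspose_mul_self M).trace_nonneg

end Matrix

open scoped ComplexOrder

/-- For a Hermitian operator `H` on a `d`-dimensional Hilbert space and a unit vector
`ψ`, one has `tr(H²) − 2⟨ψ|H²|ψ⟩ + ⟨ψ|H|ψ⟩² ≥ 0`. -/
theorem stmt17 (d : ℕ) (H : Matrix (Fin d) (Fin d) ℂ) (hH : H.IsHermitian)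
    (ψ : Fin d → ℂ) (hψ : star ψ ⬝ᵥ ψ = 1) :
    0 ≤ ((H * H).trace).re - 2 * (star ψ ⬝ᵥ (H * H).mulVec ψ).re
        + ((star ψ ⬝ᵥ H.mulVec ψ).re) ^ 2 := by
  set Q := 1 - vecMulVec ψ (star ψ)
  have hQ : Q.IsHermitian := by
    simp only [Q, IsHermitian, conjTranspose_sub, conjTranspose_one, conjTranspose_vecMulVec,
      star_star]
  have hQHQ : (Q * H * Q).IsHermitian := by
    simpa only [hQ.eq] using isHermitian_conjTranspose_mul_mul Q hH
  have hnonneg := hQHQ.trace_mul_self_nonneg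
  rw [trace_sq_compression_one_sub_vecMulVec hψ] at hnonneg
  have him : (star ψ ⬝ᵥ H *ᵥ ψ).im = 0 := hH.im_star_dotProduct_mulVec_self ψ
  simpa [sq, him] using (Complex.nonneg_iff.mp hnonneg).1
end
end
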